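/- Let h, g : ℤ → ℝ be finitely supported filters satisfying ∑_{l∈ℤ} h_l h_{l+2k} = (1/2)·δ_{k,0} and ∑_{l∈ℤ} g_l g_{l+2k} = (1/2)·δ_{k,0} for every integer k. Let (y_t)_{t≥0} be i.i.d. real random variables with E y_0 = 0, E y_0² = σ² > 0 and E y_0⁴ < ∞. For each positive integer T regard (y_0, …, y_{T−1}) as a function on ℤ/Tℤ, define W_{m,n,t} = ∑_{l∈ℤ} v_{m,n,l} y_{t−(l mod T)} for t ∈ ℤ/Tℤ, and set ξ̂_{m,n,T} = (∑_{t∈ℤ/Tℤ} W_{m,n,t}²)/(∑_{t∈ℤ/Tℤ} y_t²). Then for every m ≥ 1 and every 0 ≤ n ≤ 2^m − 1, ξ̂_{m,n,T} converges in probability to 1/2^m as T → ∞. -/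

import Mathlib

/-!
Even-shift orthonormality of `g` and `h` propagates through the packet recursion, so
`v = v_{m,n}` is orthogonal to its own `2^m`-shifts and `∑ v_l² = 2⁻ᵐ`. Expanding the circular
filter output, the numerator of `ξ̂` is `2⁻ᵐ ∑ y_t²` plus a fixed finite combination of
circular autocovariances `∑_s y_s y_{s+c}` at nonzero lags `c`. By independence and zero mean only
`O(T)` of the fourth moments in the square of such a lag sum survive, so it has mean square `O(T)`
and is `o(T)` in probability, while `∑ y_t² / T → σ²` by the strong law of large numbers.
-/

open MeasureTheory ProbabilityTheory Filter

noncomputable def uF (g h : ℤ → ℝ) (n : ℕ) : ℤ → ℝ :=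
  fun l => if n % 4 = 0 ∨ n % 4 = 3 then g l else h l

noncomputable def wp (g h : ℤ → ℝ) : ℕ → ℕ → ℤ → ℝ
  | 0, _, _ => 0
  | 1, n, l => if n = 0 then g l else h l
  | (m + 2), n, l => ∑ᶠ k : ℤ, uF g h n k * wp g h (m + 1) (n / 2) (l - 2 ^ (m + 1) * k)

open Finset Function Topology

section Filters

def ShiftOrthogonal (v : ℤ → ℝ) (p : ℤ) (a : ℝ) : Prop :=
  ∀ r : ℤ, ∑ᶠ l, v l * v (l + p * r) = a * if r = 0 then 1 else 0

noncomputable def upsampledConv (u v : ℤ → ℝ) (p l : ℤ) : ℝ :=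
  ∑ᶠ k, u k * v (l - p * k)

variable {u v : ℤ → ℝ}

lemma upsampledConv_eq_sum (hu : u.support.Finite) (p l : ℤ) :
    upsampledConv u v p l = ∑ k ∈ hu.toFinset, u k * v (l - p * k) :=
  finsum_eq_sum_of_support_subset _ fun _ hk => hu.mem_toFinset.2 (left_ne_zero_of_mul hk)

lemma finite_support_of_ne_zero_imp (hv : v.support.Finite) (c : ℤ) {f : ℤ → ℝ}
    (hf : ∀ l, f l ≠ 0 → v (l - c) ≠ 0) : f.support.Finite :=
  (hv.preimage (sub_left_injective (b := c)).injOn).subset hf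

lemma finite_support_upsampledConv (hu : u.support.Finite) (hv : v.support.Finite) (p : ℤ) :
    (upsampledConv u v p).support.Finite := by
  rw [show upsampledConv u v p = fun l => ∑ k ∈ hu.toFinset, u k * v (l - p * k) from
    funext (upsampledConv_eq_sum hu p)]
  refine Set.Finite.subset (hu.toFinset.finite_toSet.biUnion fun k _ => ?_) (support_sum _ _)
  exact finite_support_of_ne_zero_imp hv _ fun l hl => right_ne_zero_of_mul hl

lemma finsum_upsampledConv_mul_upsampledConv (hu : u.support.Finite) (hv : v.support.Finite)
    (p c : ℤ) :
    ∑ᶠ l, upsampledConv u v p l * upsampledConv u v p (l + c) =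
      ∑ k ∈ hu.toFinset, ∑ k' ∈ hu.toFinset,
        u k * u k' * ∑ᶠ l, v l * v (l + (c + p * k - p * k')) := by
  simp_rw [upsampledConv_eq_sum hu, sum_mul_sum]
  rw [finsum_sum_comm _ _ fun k _ => ?_]
  · refine sum_congr rfl fun k _ => ?_
    rw [finsum_sum_comm _ _ fun k' _ => ?_]
    · refine sum_congr rfl fun k' _ => ?_
      rw [mul_finsum, ← finsum_comp_equiv (Equiv.addRight (p * k))]
      refine finsum_congr fun l => ?_
      simp only [Equiv.coe_addRight]
      ring_nf
    · exact finite_support_of_ne_zero_imp hv (p * k) fun l hl =>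
        right_ne_zero_of_mul (left_ne_zero_of_mul hl)
  · refine finite_support_of_ne_zero_imp hv (p * k) fun l hl => ?_
    obtain ⟨k', -, hk'⟩ := exists_ne_zero_of_sum_ne_zero hl
    exact right_ne_zero_of_mul (left_ne_zero_of_mul hk')

lemma ShiftOrthogonal.upsampledConv {p : ℤ} {a b : ℝ} (hu : u.support.Finite)
    (hv : v.support.Finite) (hu_orth : ShiftOrthogonal u 2 b) (hv_orth : ShiftOrthogonal v p a) :
    ShiftOrthogonal (upsampledConv u v p) (2 * p) (a * b) := by
  unfold ShiftOrthogonal at hu_orth hv_orth ⊢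
  intro j
  have hlag : ∀ k k' : ℤ, 2 * p * j + p * k - p * k' = p * (2 * j + k - k') := fun _ _ => by ring
  rw [finsum_upsampledConv_mul_upsampledConv hu hv]
  simp_rw [hlag, hv_orth]
  have hcollapse : ∀ k, ∑ k' ∈ hu.toFinset,
      u k * u k' * (a * if 2 * j + k - k' = 0 then 1 else 0) = a * (u k * u (k + 2 * j)) := by
    intro k
    rw [sum_eq_single (k + 2 * j)]
    · rw [if_pos (by ring)]; ring
    · intro k' _ hk'
      rw [if_neg (by omega)]; ring
    · intro hk
      rw [Set.Finite.mem_toFinset, mem_support, not_not] at hk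
      rw [hk]; ring
  rw [sum_congr rfl fun k _ => hcollapse k, ← mul_sum,
    ← finsum_eq_sum_of_support_subset _ fun k hk => hu.mem_toFinset.2 (left_ne_zero_of_mul hk),
    hu_orth j]
  ring

end Filters

section WaveletPacket

variable {g h : ℤ → ℝ}

lemma uF_eq_or (g h : ℤ → ℝ) (n : ℕ) : uF g h n = g ∨ uF g h n = h := by
  by_cases hn : n % 4 = 0 ∨ n % 4 = 3
  · exact Or.inl (funext fun l => if_pos hn)
  · exact Or.inr (funext fun l => if_neg hn)

lemma wp_one (g h : ℤ → ℝ) (n : ℕ) : wp g h 1 n = if n = 0 then g else h := by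
  funext l
  split_ifs <;> simp [wp, *]

lemma wp_add_two (g h : ℤ → ℝ) (m n : ℕ) :
    wp g h (m + 2) n = upsampledConv (uF g h n) (wp g h (m + 1) (n / 2)) (2 ^ (m + 1)) :=
  rfl

lemma finite_support_uF (hg : g.support.Finite) (hh : h.support.Finite) (n : ℕ) :
    (uF g h n).support.Finite := by
  rcases uF_eq_or g h n with hu | hu <;> rwa [hu]

lemma finite_support_wp (hg : g.support.Finite) (hh : h.support.Finite) (m n : ℕ) :
    (wp g h (m + 1) n).support.Finite := by
  induction m generalizing n with
  | zero => rw [wp_one]; split_ifs <;> assumption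
  | succ m ih => exact finite_support_upsampledConv (finite_support_uF hg hh n) (ih _) _

lemma shiftOrthogonal_wp (hg : g.support.Finite) (hh : h.support.Finite)
    (hg_orth : ShiftOrthogonal g 2 (1 / 2)) (hh_orth : ShiftOrthogonal h 2 (1 / 2)) (m n : ℕ) :
    ShiftOrthogonal (wp g h (m + 1) n) (2 ^ (m + 1)) ((1 / 2) ^ (m + 1)) := by
  induction m generalizing n with
  | zero => rw [wp_one, zero_add, pow_one, pow_one]; split_ifs <;> assumption
  | succ m ih =>
    rw [wp_add_two, pow_succ' 2 (m + 1), pow_succ (1 / 2 : ℝ) (m + 1)]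
    rcases uF_eq_or g h n with hu | hu <;> rw [hu]
    · exact hg_orth.upsampledConv hg (finite_support_wp hg hh m _) (ih _)
    · exact hh_orth.upsampledConv hh (finite_support_wp hg hh m _) (ih _)

lemma sum_sq_wp (hg : g.support.Finite) (hh : h.support.Finite)
    (hg_orth : ShiftOrthogonal g 2 (1 / 2)) (hh_orth : ShiftOrthogonal h 2 (1 / 2)) (m n : ℕ)
    {S : Finset ℤ} (hS : (wp g h (m + 1) n).support ⊆ S) :
    ∑ l ∈ S, wp g h (m + 1) n l ^ 2 = (1 / 2) ^ (m + 1) := by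
  have h0 := shiftOrthogonal_wp hg hh hg_orth hh_orth m n 0
  simp only [mul_zero, add_zero, if_true, mul_one] at h0
  rw [← h0, finsum_eq_sum_of_support_subset _ fun l hl => hS (left_ne_zero_of_mul hl)]
  simp only [sq]

end WaveletPacket

lemma intCast_zmod_ne_zero {N : ℕ} {c : ℤ} (hc : c ≠ 0) (hN : c.natAbs < N) :
    (c : ZMod N) ≠ 0 := by
  rw [Ne, ZMod.intCast_zmod_eq_zero_iff_dvd]
  exact fun hdvd => hc (Int.eq_zero_of_dvd_of_natAbs_lt_natAbs hdvd (by simpa using hN))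

section Circular

variable {N : ℕ} [NeZero N]

def circAutocov (Y : ZMod N → ℝ) (c : ZMod N) : ℝ :=
  ∑ s, Y s * Y (s + c)

lemma sum_sq_circConv (v : ℤ → ℝ) {S : Finset ℤ} (hS : v.support ⊆ S) (Y : ZMod N → ℝ) :
    ∑ t, (∑ᶠ l : ℤ, v l * Y (t - l)) ^ 2 =
      (∑ l ∈ S, v l ^ 2) * circAutocov Y 0 +
        ∑ q ∈ S.offDiag, v q.1 * v q.2 * circAutocov Y ((q.1 - q.2 : ℤ) : ZMod N) := by
  classical
  have hW : ∀ t, ∑ᶠ l : ℤ, v l * Y (t - l) = ∑ l ∈ S, v l * Y (t - l) := fun t =>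
    finsum_eq_sum_of_support_subset _ fun _ hl => hS (left_ne_zero_of_mul hl)
  have hlag : ∀ l l' : ℤ,
      ∑ t, Y (t - l) * Y (t - l') = circAutocov Y ((l - l' : ℤ) : ZMod N) := fun l l' =>
    Fintype.sum_equiv (Equiv.subRight (l : ZMod N)) _ _ fun t => by
      rw [Equiv.subRight_apply, Int.cast_sub, sub_add_sub_cancel]
  calc ∑ t, (∑ᶠ l : ℤ, v l * Y (t - l)) ^ 2
      = ∑ t, ∑ q ∈ S ×ˢ S, v q.1 * v q.2 * (Y (t - q.1) * Y (t - q.2)) := by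
        refine sum_congr rfl fun t _ => ?_
        rw [hW, sq, sum_mul_sum, ← sum_product']
        exact sum_congr rfl fun _ _ => by ring
    _ = ∑ q ∈ S ×ˢ S, v q.1 * v q.2 * circAutocov Y ((q.1 - q.2 : ℤ) : ZMod N) := by
        simp_rw [sum_comm (s := univ), ← mul_sum, hlag]
    _ = _ := by
        rw [← diag_union_offDiag, sum_union (disjoint_diag_offDiag _), sum_diag, sum_mul]
        simp [sq]

end Circular

instance ENNReal.holderTriple_four_four_two : ENNReal.HolderTriple 4 4 2 :=
  ⟨by rw [show (4 : ENNReal) = 2 * 2 by norm_num, ENNReal.mul_inv (by simp) (by simp), ← add_mul,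
    ENNReal.inv_two_add_inv_two, one_mul]⟩

lemma abs_mul_mul_mul_le (a b c d : ℝ) :
    |a * b * (c * d)| ≤ (a ^ 4 + b ^ 4 + c ^ 4 + d ^ 4) / 4 := by
  rw [abs_le]
  constructor <;>
    nlinarith [sq_nonneg (a * b - c * d), sq_nonneg (a * b + c * d), sq_nonneg (a ^ 2 - b ^ 2),
      sq_nonneg (c ^ 2 - d ^ 2)]

section Moments

variable {Ω : Type*} [MeasurableSpace Ω] {μ : Measure Ω}

lemma MeasureTheory.MemLp.integrable_pow_four {f : Ω → ℝ} (hf : MemLp f 4 μ) :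
    Integrable (fun ω => f ω ^ 4) μ := by
  simpa [Real.norm_eq_abs, Even.pow_abs ⟨2, rfl⟩] using
    hf.integrable_norm_pow (p := 4) (by norm_num)

lemma MeasureTheory.MemLp.mul_of_four {f g : Ω → ℝ} (hf : MemLp f 4 μ) (hg : MemLp g 4 μ) :
    MemLp (fun ω => f ω * g ω) 2 μ :=
  hg.mul' hf

lemma abs_integral_mul_mul_mul_le {a b c d : Ω → ℝ} {K : ℝ} (ha : MemLp a 4 μ) (hb : MemLp b 4 μ)
    (hc : MemLp c 4 μ) (hd : MemLp d 4 μ) (hKa : ∫ ω, a ω ^ 4 ∂μ ≤ K)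
    (hKb : ∫ ω, b ω ^ 4 ∂μ ≤ K) (hKc : ∫ ω, c ω ^ 4 ∂μ ≤ K) (hKd : ∫ ω, d ω ^ 4 ∂μ ≤ K) :
    |∫ ω, a ω * b ω * (c ω * d ω) ∂μ| ≤ K := by
  have ha4 := ha.integrable_pow_four
  have hb4 := hb.integrable_pow_four
  have hc4 := hc.integrable_pow_four
  have hd4 := hd.integrable_pow_four
  have hab4 : Integrable (fun ω => a ω ^ 4 + b ω ^ 4) μ := ha4.add hb4
  have habc4 : Integrable (fun ω => a ω ^ 4 + b ω ^ 4 + c ω ^ 4) μ := hab4.add hc4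
  calc |∫ ω, a ω * b ω * (c ω * d ω) ∂μ|
      ≤ ∫ ω, (a ω ^ 4 + b ω ^ 4 + c ω ^ 4 + d ω ^ 4) / 4 ∂μ :=
        abs_integral_le_integral_abs.trans <| integral_mono_of_nonneg
          (ae_of_all _ fun _ => abs_nonneg _) ((habc4.add hd4).div_const 4)
          (ae_of_all _ fun ω => abs_mul_mul_mul_le _ _ _ _)
    _ = ((∫ ω, a ω ^ 4 ∂μ) + (∫ ω, b ω ^ 4 ∂μ) + (∫ ω, c ω ^ 4 ∂μ) + ∫ ω, d ω ^ 4 ∂μ) / 4 := by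
        rw [integral_div, integral_add habc4 hd4, integral_add hab4 hc4, integral_add ha4 hb4]
    _ ≤ K := by linarith

lemma integral_mul_mul_mul_eq_zero {ι : Type*} {X : ι → Ω → ℝ} (hind : iIndepFun X μ)
    (hmeas : ∀ i, Measurable (X i)) {a b c d : ι} (hmean : ∫ ω, X a ω ∂μ = 0) (hab : a ≠ b)
    (hac : a ≠ c) (had : a ≠ d) :
    ∫ ω, X a ω * X b ω * (X c ω * X d ω) ∂μ = 0 := by
  classical
  have hdisj : Disjoint ({a} : Finset ι) {b, c, d} := by simp [hab, hac, had]
  have hindep : IndepFun (X a) (fun ω => X b ω * X c ω * X d ω) μ :=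
    (hind.indepFun_finset _ _ hdisj hmeas).comp
      (φ := fun x : ({a} : Finset ι) → ℝ => x ⟨a, mem_singleton_self a⟩)
      (ψ := fun x : ({b, c, d} : Finset ι) → ℝ => x ⟨b, by simp⟩ * x ⟨c, by simp⟩ * x ⟨d, by simp⟩)
      (by fun_prop) (by fun_prop)
  calc ∫ ω, X a ω * X b ω * (X c ω * X d ω) ∂μ
      = ∫ ω, X a ω * (X b ω * X c ω * X d ω) ∂μ := by simp_rw [mul_assoc]
    _ = 0 := by
        rw [← Pi.mul_def, hindep.integral_mul_eq_mul_integral (hmeas a).aestronglyMeasurable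
          (by fun_prop), hmean, zero_mul]

lemma integral_sq_sum_mul_le {ι : Type*} (P : Finset ι) (w : ι → ℝ) {Z : ι → Ω → ℝ}
    (hZ : ∀ p ∈ P, Integrable (fun ω => Z p ω ^ 2) μ) {B : ℝ}
    (hB : ∀ p ∈ P, ∫ ω, Z p ω ^ 2 ∂μ ≤ B) :
    ∫ ω, (∑ p ∈ P, w p * Z p ω) ^ 2 ∂μ ≤ (∑ p ∈ P, |w p|) ^ 2 * B := by
  have hCS : ∀ ω, (∑ p ∈ P, w p * Z p ω) ^ 2 ≤ (∑ p ∈ P, |w p|) * ∑ p ∈ P, |w p| * Z p ω ^ 2 :=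
    fun ω => sum_sq_le_sum_mul_sum_of_sq_le_mul P (f := fun p => |w p|)
      (g := fun p => |w p| * Z p ω ^ 2) (fun _ _ => abs_nonneg _) (fun _ _ => by positivity)
      fun p _ => le_of_eq (by rw [mul_pow, ← sq_abs (w p)]; ring)
  have hint : ∀ p ∈ P, Integrable (fun ω => |w p| * Z p ω ^ 2) μ :=
    fun p hp => (hZ p hp).const_mul _
  calc ∫ ω, (∑ p ∈ P, w p * Z p ω) ^ 2 ∂μ
      ≤ ∫ ω, (∑ p ∈ P, |w p|) * ∑ p ∈ P, |w p| * Z p ω ^ 2 ∂μ :=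
        integral_mono_of_nonneg (ae_of_all _ fun _ => sq_nonneg _)
          ((integrable_finsetSum P hint).const_mul _) (ae_of_all _ hCS)
    _ = (∑ p ∈ P, |w p|) * ∑ p ∈ P, |w p| * ∫ ω, Z p ω ^ 2 ∂μ := by
        rw [integral_const_mul, integral_finsetSum P hint]
        simp_rw [integral_const_mul]
    _ ≤ (∑ p ∈ P, |w p|) * ∑ p ∈ P, |w p| * B := by
        gcongr with p hp
        exact hB p hp
    _ = (∑ p ∈ P, |w p|) ^ 2 * B := by rw [← sum_mul]; ring

end Moments

section CircAutocovMoments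

variable {Ω : Type*} [MeasurableSpace Ω] {μ : Measure Ω} {N : ℕ} [NeZero N]
  {X : ZMod N → Ω → ℝ}

lemma memLp_circAutocov (hL4 : ∀ s, MemLp (X s) 4 μ) (c : ZMod N) :
    MemLp (fun ω => circAutocov (X · ω) c) 2 μ :=
  memLp_finsetSum _ fun s _ => (hL4 s).mul_of_four (hL4 (s + c))

lemma integral_circAutocov_sq_le (hind : iIndepFun X μ) (hmeas : ∀ s, Measurable (X s))
    (hmean : ∀ s, ∫ ω, X s ω ∂μ = 0) (hL4 : ∀ s, MemLp (X s) 4 μ) {K : ℝ}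
    (hK : ∀ s, ∫ ω, X s ω ^ 4 ∂μ ≤ K) {c : ZMod N} (hc : c ≠ 0) :
    ∫ ω, circAutocov (X · ω) c ^ 2 ∂μ ≤ 3 * N * K := by
  classical
  have hK0 : 0 ≤ K := (integral_nonneg fun ω => by positivity).trans (hK 0)
  have hint : ∀ s s', Integrable (fun ω => X s ω * X (s + c) ω * (X s' ω * X (s' + c) ω)) μ :=
    fun s s' => ((hL4 s).mul_of_four (hL4 (s + c))).integrable_mul
      ((hL4 s').mul_of_four (hL4 (s' + c)))
  -- `X s` is independent of the other three factors unless `s' ∈ {s, s + c, s - c}`.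
  have hvanish : ∀ s s', s' ∉ ({s, s + c, s - c} : Finset (ZMod N)) →
      ∫ ω, X s ω * X (s + c) ω * (X s' ω * X (s' + c) ω) ∂μ = 0 := by
    intro s s' hs'
    simp only [mem_insert, mem_singleton, not_or] at hs'
    refine integral_mul_mul_mul_eq_zero hind hmeas (hmean s) ?_ (Ne.symm hs'.1) ?_
    · simpa using hc
    · rintro rfl
      exact hs'.2.2 (by ring)
  have hrow : ∀ s, ∑ s', ∫ ω, X s ω * X (s + c) ω * (X s' ω * X (s' + c) ω) ∂μ ≤ 3 * K := by
    intro s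
    rw [← sum_subset (subset_univ {s, s + c, s - c}) fun s' _ hs' => hvanish s s' hs']
    calc _ ≤ #{s, s + c, s - c} • K := sum_le_card_nsmul _ _ _ fun s' _ =>
          (le_abs_self _).trans (abs_integral_mul_mul_mul_le (hL4 _) (hL4 _) (hL4 _) (hL4 _)
            (hK _) (hK _) (hK _) (hK _))
      _ ≤ 3 * K := by
          rw [nsmul_eq_mul]
          gcongr
          exact_mod_cast card_le_three
  calc ∫ ω, circAutocov (X · ω) c ^ 2 ∂μ
      = ∑ s, ∑ s', ∫ ω, X s ω * X (s + c) ω * (X s' ω * X (s' + c) ω) ∂μ := by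
        simp_rw [circAutocov, sq, sum_mul_sum]
        rw [integral_finsetSum _ fun s _ => integrable_finsetSum _ fun s' _ => hint s s']
        simp_rw [integral_finsetSum _ fun s' _ => hint _ s']
    _ ≤ ∑ _s : ZMod N, 3 * K := sum_le_sum fun s _ => hrow s
    _ = 3 * N * K := by rw [sum_const, card_univ, ZMod.card, nsmul_eq_mul]; ring

end CircAutocovMoments

section Convergence

variable {Ω ι : Type*} [MeasurableSpace Ω] {μ : Measure Ω} [IsFiniteMeasure μ] {l : Filter ι}

lemma tendstoInMeasure_zero_of_integral_sq {f : ι → Ω → ℝ}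
    (hf : ∀ i, Integrable (fun ω => f i ω ^ 2) μ)
    (hlim : Tendsto (fun i => ∫ ω, f i ω ^ 2 ∂μ) l (𝓝 0)) : TendstoInMeasure μ f l 0 := by
  rw [tendstoInMeasure_iff_measureReal_dist]
  intro ε hε
  have hcheb : ∀ i, μ.real {ω | ε ≤ dist (f i ω) ((0 : Ω → ℝ) ω)} ≤
      (∫ ω, f i ω ^ 2 ∂μ) / ε ^ 2 := by
    intro i
    rw [le_div_iff₀ (by positivity), mul_comm]
    refine le_trans (mul_le_mul_of_nonneg_left (measureReal_mono fun ω hω => ?_) (sq_nonneg ε))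
      (mul_meas_ge_le_integral_of_nonneg (ae_of_all _ fun ω => sq_nonneg _) (hf i) (ε ^ 2))
    simp only [Set.mem_ofPred_eq, Pi.zero_apply, Real.dist_0_eq_abs] at hω ⊢
    simpa using pow_le_pow_left₀ hε.le hω 2
  refine squeeze_zero (fun i => measureReal_nonneg) hcheb ?_
  simpa using hlim.div_const (ε ^ 2)

lemma tendstoInMeasure_add_div {f g : ι → Ω → ℝ} {c : ℝ} (a : ℝ)
    (hf : TendstoInMeasure μ f l 0) (hg : TendstoInMeasure μ g l fun _ => c) (hc : 0 < c) :
    TendstoInMeasure μ (fun i ω => (a * g i ω + f i ω) / g i ω) l fun _ => a := by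
  rw [tendstoInMeasure_iff_measureReal_dist] at hf hg ⊢
  intro ε hε
  have hsub : ∀ i, {ω | ε ≤ dist ((a * g i ω + f i ω) / g i ω) a} ⊆
      {ω | c / 2 ≤ dist (g i ω) c} ∪ {ω | ε * c / 2 ≤ dist (f i ω) ((0 : Ω → ℝ) ω)} := by
    intro i ω hω
    by_contra hcon
    simp only [Set.mem_union, Set.mem_ofPred_eq, not_or, not_le, Real.dist_eq, Pi.zero_apply,
      sub_zero] at hcon hω
    obtain ⟨hgc, hfc⟩ := hcon
    have hg : c / 2 < g i ω := by linarith [(abs_lt.1 hgc).1]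
    have hg0 : 0 < g i ω := by linarith
    rw [show (a * g i ω + f i ω) / g i ω - a = f i ω / g i ω by field_simp; ring, abs_div,
      abs_of_pos hg0, le_div_iff₀ hg0] at hω
    nlinarith [mul_lt_mul_of_pos_left hg hε]
  refine squeeze_zero (fun i => measureReal_nonneg)
    (fun i => (measureReal_mono (hsub i)).trans (measureReal_union_le _ _)) ?_
  simpa using (hg _ (by positivity)).add (hf _ (by positivity))

end Convergence

section IID

variable {Ω : Type*} [MeasurableSpace Ω] {μ : Measure Ω} {y : ℕ → Ω → ℝ}

lemma tendstoInMeasure_average_sq [IsFiniteMeasure μ] (hind : iIndepFun y μ)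
    (hid : ∀ t, IdentDistrib (y t) (y 0) μ μ) (hmeas : ∀ t, Measurable (y t))
    (hint : Integrable (fun ω => y 0 ω ^ 2) μ) :
    TendstoInMeasure μ (fun T ω => (∑ i ∈ range (T + 1), y i ω ^ 2) / (T + 1)) atTop
      fun _ => ∫ ω, y 0 ω ^ 2 ∂μ := by
  have hslln := strong_law_ae (fun i ω => y i ω ^ 2) hint
    (fun i j hij => (hind.indepFun hij).comp (measurable_id.pow_const 2)
      (measurable_id.pow_const 2))
    fun i => (hid i).comp (measurable_id.pow_const 2)
  refine tendstoInMeasure_of_tendsto_ae (fun T => by fun_prop) ?_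
  filter_upwards [hslln] with ω hω
  convert hω.comp (tendsto_add_atTop_nat 1) using 2 with T
  simp [div_eq_inv_mul]

lemma integral_sq_sum_circAutocov_le (hind : iIndepFun y μ)
    (hid : ∀ t, IdentDistrib (y t) (y 0) μ μ) (hmeas : ∀ t, Measurable (y t))
    (hmean : ∫ ω, y 0 ω ∂μ = 0) (hL4 : MemLp (y 0) 4 μ) {N : ℕ} [NeZero N] {ι : Type*}
    (P : Finset ι) (w : ι → ℝ) {lag : ι → ZMod N} (hlag : ∀ p ∈ P, lag p ≠ 0) :
    ∫ ω, (∑ p ∈ P, w p * circAutocov (fun s : ZMod N => y s.val ω) (lag p)) ^ 2 ∂μ ≤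
      (∑ p ∈ P, |w p|) ^ 2 * (3 * N * ∫ ω, y 0 ω ^ 4 ∂μ) := by
  have hL4' : ∀ s : ZMod N, MemLp (y s.val) 4 μ := fun s => (hid _).symm.memLp_snd hL4
  refine integral_sq_sum_mul_le P w (fun p _ => (memLp_circAutocov hL4' (lag p)).integrable_sq)
    fun p hp => integral_circAutocov_sq_le (hind.precomp (ZMod.val_injective N))
      (fun s => hmeas _) (fun s => (hid _).integral_eq.trans hmean) hL4'
      (fun s => ((hid _).comp (measurable_id.pow_const 4)).integral_eq.le) (hlag p hp)

lemma tendstoInMeasure_sum_circAutocov_div [IsFiniteMeasure μ] (hind : iIndepFun y μ)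
    (hid : ∀ t, IdentDistrib (y t) (y 0) μ μ) (hmeas : ∀ t, Measurable (y t))
    (hmean : ∫ ω, y 0 ω ∂μ = 0) (hL4 : MemLp (y 0) 4 μ) {ι : Type*} (P : Finset ι) (w : ι → ℝ)
    (lag : ι → ℤ) (hlag : ∀ p ∈ P, lag p ≠ 0) :
    TendstoInMeasure μ (fun T ω =>
      (∑ p ∈ P, w p * circAutocov (fun s : ZMod (T + 1) => y s.val ω) (lag p)) / (T + 1))
      atTop 0 := by
  set C := (∑ p ∈ P, |w p|) ^ 2 * (3 * ∫ ω, y 0 ω ^ 4 ∂μ)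
  have hlag_ne : ∀ᶠ T in atTop, ∀ p ∈ P, (lag p : ZMod (T + 1)) ≠ 0 :=
    (eventually_all_finset P).2 fun p hp => (eventually_ge_atTop (lag p).natAbs).mono
      fun T hT => intCast_zmod_ne_zero (hlag p hp) (by omega)
  have hbound : ∀ᶠ T : ℕ in atTop, ∫ ω, ((∑ p ∈ P, w p *
      circAutocov (fun s : ZMod (T + 1) => y s.val ω) (lag p)) / (T + 1)) ^ 2 ∂μ ≤ C / (T + 1) := by
    filter_upwards [hlag_ne] with T hT
    have hsq := integral_sq_sum_circAutocov_le hind hid hmeas hmean hL4 P w hT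
    simp_rw [div_pow, integral_div]
    rw [div_le_div_iff₀ (by positivity) (by positivity)]
    push_cast at hsq
    nlinarith
  refine tendstoInMeasure_zero_of_integral_sq (fun T => ?_) ?_
  · have hR : MemLp (fun ω =>
        ∑ p ∈ P, w p * circAutocov (fun s : ZMod (T + 1) => y s.val ω) (lag p)) 2 μ :=
      memLp_finsetSum _ fun p _ =>
        (memLp_circAutocov (fun s => (hid _).symm.memLp_snd hL4) _).const_mul (w p)
    simpa [div_pow] using hR.integrable_sq.div_const (((T : ℝ) + 1) ^ 2)
  · refine squeeze_zero' (Eventually.of_forall fun T => integral_nonneg fun ω => sq_nonneg _)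
      hbound ?_
    simpa [Function.comp_def] using
      (tendsto_const_div_atTop_nhds_zero_nat C).comp (tendsto_add_atTop_nat 1)

end IID

theorem stmt14_general (Ω : Type) [MeasureSpace Ω] [IsProbabilityMeasure (ℙ : Measure Ω)]
    (h g : ℤ → ℝ)
    (hhfin : (Function.support h).Finite) (hgfin : (Function.support g).Finite)
    (horth_h : ∀ k : ℤ,
      ∑ᶠ l : ℤ, h l * h (l + 2 * k) = (1 / 2) * (if k = 0 then 1 else 0))
    (horth_g : ∀ k : ℤ,
      ∑ᶠ l : ℤ, g l * g (l + 2 * k) = (1 / 2) * (if k = 0 then 1 else 0))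
    (y : ℕ → Ω → ℝ) (hmeas : ∀ t : ℕ, Measurable (y t))
    (hind : iIndepFun y ℙ)
    (hid : ∀ t : ℕ, IdentDistrib (y t) (y 0) ℙ ℙ)
    (hmean : ∫ ω, y 0 ω = 0)
    (σ2 : ℝ) (hσ : 0 < σ2) (hvar : ∫ ω, (y 0 ω) ^ 2 = σ2)
    (hL4 : MemLp (y 0) 4)
    (m : ℕ) (hm : 1 ≤ m) (n : ℕ) :
    TendstoInMeasure ℙ
      (fun T : ℕ => fun ω =>
        (∑ t : ZMod (T + 1),
            (∑ᶠ l : ℤ, wp g h m n l * y ((t - (l : ZMod (T + 1))).val) ω) ^ 2)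
          / (∑ t : ZMod (T + 1), (y t.val ω) ^ 2))
      atTop (fun _ => 1 / 2 ^ m) := by
  obtain ⟨m, rfl⟩ := Nat.exists_eq_add_of_le' hm
  set v := wp g h (m + 1) n
  set S := (finite_support_wp hgfin hhfin m n).toFinset
  have hvS : v.support ⊆ S := by simp [S, v]
  set D : ℕ → Ω → ℝ := fun T ω => ∑ t : ZMod (T + 1), y t.val ω ^ 2
  set R : ℕ → Ω → ℝ := fun T ω => ∑ q ∈ S.offDiag,
    v q.1 * v q.2 * circAutocov (fun s : ZMod (T + 1) => y s.val ω) ((q.1 - q.2 : ℤ) : ZMod (T + 1))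
  have hnum : ∀ T ω, ∑ t : ZMod (T + 1), (∑ᶠ l : ℤ, v l * y ((t - (l : ZMod (T + 1))).val) ω) ^ 2
      = (1 / 2) ^ (m + 1) * D T ω + R T ω := fun T ω => by
    rw [sum_sq_circConv v hvS (fun s => y s.val ω), sum_sq_wp hgfin hhfin horth_g horth_h m n hvS]
    simp [circAutocov, D, R, sq]
  have hD : TendstoInMeasure ℙ (fun T ω => D T ω / (T + 1)) atTop fun _ => σ2 := by
    have hint : Integrable (fun ω => y 0 ω ^ 2) ℙ :=
      (hL4.mono_exponent (by norm_num)).integrable_sq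
    rw [← hvar]
    convert tendstoInMeasure_average_sq hind hid hmeas hint using 4 with T ω
    -- `ZMod (T + 1)` is `Fin (T + 1)` by definition.
    exact Fin.sum_univ_eq_sum_range (fun i => y i ω ^ 2) (T + 1)
  have hR : TendstoInMeasure ℙ (fun T ω => R T ω / (T + 1)) atTop 0 :=
    tendstoInMeasure_sum_circAutocov_div hind hid hmeas hmean hL4 S.offDiag
      (fun q => v q.1 * v q.2) (fun q => q.1 - q.2)
      fun q hq => sub_ne_zero.2 (mem_offDiag.1 hq).2.2
  convert tendstoInMeasure_add_div ((1 / 2) ^ (m + 1)) hR hD hσ using 1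
  · funext T ω
    rw [hnum]
    change _ / D T ω = _
    field_simp
  · simp

/-- For i.i.d. mean-zero random variables with variance `σ² > 0` and finite
fourth moment, under even-shift orthonormality of the filters, the empirical wavelet
variance ratio `ξ̂_{m,n,T}` (computed circularly from `y_0,…,y_{T-1}` on `ℤ/Tℤ`)
converges in probability to `1/2^m` as `T → ∞`. -/
theorem stmt14 (Ω : Type) [MeasureSpace Ω] [IsProbabilityMeasure (ℙ : Measure Ω)]
    (h g : ℤ → ℝ)
    (hhfin : (Function.support h).Finite) (hgfin : (Function.support g).Finite)
    (horth_h : ∀ k : ℤ,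
      ∑ᶠ l : ℤ, h l * h (l + 2 * k) = (1 / 2) * (if k = 0 then 1 else 0))
    (horth_g : ∀ k : ℤ,
      ∑ᶠ l : ℤ, g l * g (l + 2 * k) = (1 / 2) * (if k = 0 then 1 else 0))
    (y : ℕ → Ω → ℝ) (hmeas : ∀ t : ℕ, Measurable (y t))
    (hind : iIndepFun y ℙ)
    (hid : ∀ t : ℕ, IdentDistrib (y t) (y 0) ℙ ℙ)
    (hmean : ∫ ω, y 0 ω = 0)
    (σ2 : ℝ) (hσ : 0 < σ2) (hvar : ∫ ω, (y 0 ω) ^ 2 = σ2)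
    (hL4 : MemLp (y 0) 4)
    (m : ℕ) (hm : 1 ≤ m) (n : ℕ) (hn : n ≤ 2 ^ m - 1) :
    TendstoInMeasure ℙ
      (fun T : ℕ => fun ω =>
        (∑ t : ZMod (T + 1),
            (∑ᶠ l : ℤ, wp g h m n l * y ((t - (l : ZMod (T + 1))).val) ω) ^ 2)
          / (∑ t : ZMod (T + 1), (y t.val ω) ^ 2))
      atTop (fun _ => 1 / 2 ^ m) :=
  stmt14_general Ω h g hhfin hgfin horth_h horth_g y hmeas hind hid hmean σ2 hσ hvar hL4 m hm n
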